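/- In the Heisenberg group H^1 = ℝ³ with group law (x,y,t)∘(x',y',t') = (x+x', y+y', t+t'+(xy'−x'y)/2), let P ⊂ ℝ³ be a plane with Euclidean normal N = (a,0,c), where a² + c² ≠ 0, and let S ⊆ ℝ³ be a graph over P with respect to N, i.e. for every g ∈ P the set {s ∈ ℝ : g + s·(a,0,c) ∈ S} has exactly one element. Then for every g₀ = (x₀,y₀,t₀) ∈ ℝ³, the left-translate g₀∘S = {g₀∘g : g ∈ S} is a graph over some plane P̃ with Euclidean normal Ñ = (a, 0, c − a·y₀/2), i.e. there is a plane P̃ perpendicular (in the Euclidean sense) to Ñ such that for every g ∈ P̃ the set {s ∈ ℝ : g + s·Ñ ∈ S̃} has exactly one element, where S̃ = g₀∘S. -/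
import Mathlib


/-- The Heisenberg group law on `ℝ³`. -/
noncomputable def hmul (g g' : ℝ × ℝ × ℝ) : ℝ × ℝ × ℝ :=
  (g.1 + g'.1, g.2.1 + g'.2.1, g.2.2 + g'.2.2 + (g.1 * g'.2.1 - g'.1 * g.2.1) / 2)

lemma hmul_left_cancel (g w w' : ℝ × ℝ × ℝ) (h : hmul g w = hmul g w') : w = w' := by
  simp only [hmul, Prod.ext_iff] at h ⊢
  obtain ⟨h1, h2, h3⟩ := h
  have e1 : w.1 = w'.1 := by linarith
  have e2 : w.2.1 = w'.2.1 := by linarith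
  rw [e1, e2] at h3
  exact ⟨e1, e2, by linarith⟩

/-- if `S` is a graph over the plane `P` with Euclidean normal `N = (a,0,c)`
(`a² + c² ≠ 0`), then for every `g₀ = (x₀,y₀,t₀)` the Heisenberg left-translate `g₀∘S` is a
graph over some plane `P̃` with Euclidean normal `Ñ = (a, 0, c − a·y₀/2)`. -/
theorem stmt13 (a c γ : ℝ) (hac : a ^ 2 + c ^ 2 ≠ 0) (S : Set (ℝ × ℝ × ℝ))
    (hS : ∀ g ∈ {g : ℝ × ℝ × ℝ | a * g.1 + c * g.2.2 = γ},
      ∃! s : ℝ, g + s • ((a, 0, c) : ℝ × ℝ × ℝ) ∈ S)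
    (x₀ y₀ t₀ : ℝ) :
    ∃ γ' : ℝ, ∀ g ∈ {g : ℝ × ℝ × ℝ | a * g.1 + (c - a * y₀ / 2) * g.2.2 = γ'},
      ∃! s : ℝ, g + s • ((a, 0, c - a * y₀ / 2) : ℝ × ℝ × ℝ) ∈ hmul (x₀, y₀, t₀) '' S := by
  refine ⟨0, ?_⟩
  intro g _
  set p : ℝ × ℝ × ℝ :=
    (g.1 - x₀, g.2.1 - y₀, g.2.2 - t₀ + (y₀ * g.1 - x₀ * g.2.1) / 2) with hp
  set s₀ : ℝ := (a * p.1 + c * p.2.2 - γ) / (a ^ 2 + c ^ 2) with hs₀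
  set q : ℝ × ℝ × ℝ := p - s₀ • ((a, 0, c) : ℝ × ℝ × ℝ) with hq
  have hqP : q ∈ {g : ℝ × ℝ × ℝ | a * g.1 + c * g.2.2 = γ} := by
    simp only [Set.mem_setOf_eq, hq, hs₀, Prod.fst_sub, Prod.snd_sub, Prod.smul_mk,
      smul_eq_mul, Prod.mk_sub_mk]
    field_simp
    ring
  obtain ⟨u, hu, huniq⟩ := hS q hqP
  have key : ∀ s : ℝ,
      (g + s • ((a, 0, c - a * y₀ / 2) : ℝ × ℝ × ℝ) ∈ hmul (x₀, y₀, t₀) '' S) ↔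
      (q + (s + s₀) • ((a, 0, c) : ℝ × ℝ × ℝ) ∈ S) := by
    intro s
    have heq : g + s • ((a, 0, c - a * y₀ / 2) : ℝ × ℝ × ℝ)
        = hmul (x₀, y₀, t₀) (q + (s + s₀) • ((a, 0, c) : ℝ × ℝ × ℝ)) := by
      simp only [hmul, hq, hp, Prod.ext_iff, Prod.smul_mk, smul_eq_mul, Prod.mk_sub_mk,
        Prod.mk_add_mk, Prod.fst_add, Prod.snd_add, Prod.fst_sub, Prod.snd_sub]
      refine ⟨by ring, by ring, by ring⟩
    constructor
    · rintro ⟨w, hw, hw2⟩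
      have : w = q + (s + s₀) • ((a, 0, c) : ℝ × ℝ × ℝ) :=
        hmul_left_cancel _ _ _ (hw2.trans heq)
      rwa [← this]
    · intro h
      exact ⟨_, h, heq.symm⟩
  refine ⟨u - s₀, ?_, ?_⟩
  · refine (key _).mpr ?_
    simpa using hu
  · intro s hs
    have := huniq _ ((key s).mp hs)
    linarith
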